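/- Let $N > 1$ be a squarefree positive integer. Then for every positive integer $n$, $-\sum_{M \mid N, M \neq 1} \varphi(M) \cdot \frac{\mu(M)}{\varphi(M)} \sigma(n_M') = \sigma(n) - N\sigma(n/N)\cdot[N \mid n]$, where $n_M'$ denotes the part of $n$ coprime to $M$, i.e., $-\sum_{M\mid N, M\neq 1}\mu(M)\sigma(n_M') = a_n$ with $a_n = \sigma(n)$ if $N \nmid n$ and $a_n = \sigma(n) - N\sigma(n/N)$ if $N \mid n$. -/

import Mathlib

open ArithmeticFunction Finset
open scoped ArithmeticFunction.Moebius

/-! Since `σ(n'_M) = ∑_{d ∣ n, (d, M) = 1} d`, swapping the sums turns `∑_{M ∣ N} μ(M) σ(n'_M)`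
into `∑_{d ∣ n} d ∑_{M ∣ N, (M, d) = 1} μ(M)`. For squarefree `N` the divisors of `N` coprime
to `d` are exactly the divisors of `N / gcd(N, d)`, so the inner sum is `[N ∣ d]`, and
`∑_{d ∣ n, N ∣ d} d = [N ∣ n] N σ(n/N)`. The term `M = 1` is `σ(n)`. -/

namespace Nat

def coprimePart (n M : ℕ) : ℕ :=
  ∏ p ∈ n.primeFactors, if p ∣ M then 1 else p ^ n.factorization p

variable {n M d : ℕ}

theorem coprimePart_mul_prod_eq_self (hn : n ≠ 0) :
    coprimePart n M * ∏ p ∈ n.primeFactors, (if p ∣ M then p ^ n.factorization p else 1) = n := by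
  rw [coprimePart, ← prod_mul_distrib]
  conv_rhs => rw [← prod_factorization_pow_eq_self hn, prod_factorization_eq_prod_primeFactors]
  exact prod_congr rfl fun p _ => by split_ifs <;> simp

theorem coprime_coprimePart (n M : ℕ) : Coprime (coprimePart n M) M := by
  refine Coprime.prod_left fun p hp => ?_
  split_ifs with hpM
  · exact coprime_one_left M
  · exact ((prime_of_mem_primeFactors hp).coprime_iff_not_dvd.2 hpM).pow_left _

theorem dvd_coprimePart_iff (hn : n ≠ 0) : d ∣ coprimePart n M ↔ d ∣ n ∧ Coprime d M := by
  have hsplit := coprimePart_mul_prod_eq_self (M := M) hn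
  refine ⟨fun hd => ⟨hd.trans (Dvd.intro _ hsplit), (coprime_coprimePart n M).coprime_dvd_left hd⟩,
    fun ⟨hdn, hdM⟩ => ?_⟩
  -- the complementary factor is built from primes dividing `M`, hence is coprime to `d`
  refine Coprime.dvd_of_dvd_mul_right (Coprime.prod_right fun p _ => ?_) (hsplit ▸ hdn)
  split_ifs with hpM
  · exact (hdM.coprime_dvd_right hpM).pow_right _
  · exact coprime_one_right d

theorem divisors_coprimePart (hn : n ≠ 0) :
    (coprimePart n M).divisors = {d ∈ n.divisors | Coprime d M} := by
  have hpos : coprimePart n M ≠ 0 :=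
    ne_zero_of_dvd_ne_zero hn (Dvd.intro _ (coprimePart_mul_prod_eq_self hn))
  ext d
  simp only [mem_filter, mem_divisors, dvd_coprimePart_iff hn]
  tauto

theorem filter_divisors_coprime_of_squarefree {N : ℕ} (hN : Squarefree N) (hd : d ≠ 0) :
    {M ∈ N.divisors | Coprime M d} = (N / N.gcd d).divisors := by
  have hg : N.gcd d ∣ N := gcd_dvd_left N d
  have hquot : N / N.gcd d ≠ 0 :=
    (Nat.div_pos (le_of_dvd hN.ne_zero.bot_lt hg) (gcd_pos_of_pos_right N hd.bot_lt)).ne'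
  ext M
  simp only [mem_filter, mem_divisors, ne_eq, hN.ne_zero, hquot, not_false_eq_true, and_true]
  constructor
  · rintro ⟨hMN, hMd⟩
    exact dvd_div_of_mul_dvd
      ((hMd.coprime_dvd_right (gcd_dvd_right N d)).symm.mul_dvd_of_dvd_of_dvd hg hMN)
  · intro hM
    exact ⟨hM.trans (div_dvd_of_dvd hg), (coprime_div_gcd_of_squarefree hN hd).coprime_dvd_left hM⟩

theorem sum_moebius_filter_coprime_of_squarefree {N : ℕ} (hN : Squarefree N) (hd : d ≠ 0) :
    ∑ M ∈ N.divisors with Coprime M d, μ M = if N ∣ d then 1 else 0 := by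
  rw [filter_divisors_coprime_of_squarefree hN hd, ← coe_mul_zeta_apply, moebius_mul_coe_zeta,
    one_apply]
  have hquot : N / N.gcd d = 1 ↔ N ∣ d := by
    rw [Nat.div_eq_iff_eq_mul_left (gcd_pos_of_pos_right N hd.bot_lt) (gcd_dvd_left N d), one_mul,
      eq_comm, gcd_eq_left_iff_dvd]
  exact if_congr hquot rfl rfl

theorem sum_divisors_filter_dvd {R : Type*} [AddCommMonoid R] (f : ℕ → R) (N n : ℕ) :
    ∑ d ∈ n.divisors with N ∣ d, f d = if N ∣ n then ∑ e ∈ (n / N).divisors, f (N * e) else 0 := by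
  split_ifs with hNn
  · obtain ⟨k, rfl⟩ := hNn
    rcases N.eq_zero_or_pos with rfl | hN
    · simp
    rw [Nat.mul_div_cancel_left k hN]
    refine sum_nbij' (· / N) (N * ·) (fun d hd => ?_) (fun e he => ?_) (fun d hd => ?_)
      (fun e _ => Nat.mul_div_cancel_left e hN) (fun d hd => ?_)
    all_goals simp only [mem_filter, mem_divisors] at *
    · obtain ⟨⟨hdk, hk⟩, m, rfl⟩ := hd
      rw [Nat.mul_div_cancel_left m hN]
      exact ⟨(Nat.mul_dvd_mul_iff_left hN).1 hdk, right_ne_zero_of_mul hk⟩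
    · exact ⟨⟨mul_dvd_mul_left N he.1, mul_ne_zero hN.ne' he.2⟩, dvd_mul_right N e⟩
    all_goals obtain ⟨-, m, rfl⟩ := hd
    all_goals rw [Nat.mul_div_cancel_left m hN]
  · refine sum_eq_zero fun d hd => absurd ?_ hNn
    exact (mem_filter.1 hd).2.trans (dvd_of_mem_divisors (mem_filter.1 hd).1)

theorem sum_moebius_mul_sum_divisors_coprimePart {R : Type*} [CommRing R] {N : ℕ}
    (hN : Squarefree N) (hn : n ≠ 0) :
    ∑ M ∈ N.divisors, ((μ M : ℤ) : R) * ∑ d ∈ (coprimePart n M).divisors, (d : R) =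
      if N ∣ n then N * ∑ e ∈ (n / N).divisors, (e : R) else 0 := by
  calc ∑ M ∈ N.divisors, ((μ M : ℤ) : R) * ∑ d ∈ (coprimePart n M).divisors, (d : R)
      = ∑ M ∈ N.divisors, ∑ d ∈ {d ∈ n.divisors | Coprime d M}, ((μ M : ℤ) : R) * d := by
        simp only [divisors_coprimePart hn, mul_sum]
    _ = ∑ d ∈ n.divisors, (∑ M ∈ N.divisors with Coprime M d, ((μ M : ℤ) : R)) * d := by
        simp only [sum_mul]
        refine sum_comm' fun M d => ?_
        simp only [mem_filter, coprime_comm]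
        tauto
    _ = ∑ d ∈ n.divisors, if N ∣ d then (d : R) else 0 := by
        refine sum_congr rfl fun d hd => ?_
        rw [← Int.cast_sum,
          sum_moebius_filter_coprime_of_squarefree hN (pos_of_mem_divisors hd).ne']
        split_ifs <;> simp
    _ = if N ∣ n then N * ∑ e ∈ (n / N).divisors, (e : R) else 0 := by
        rw [← sum_filter, sum_divisors_filter_dvd]
        push_cast
        rw [mul_sum]

end Nat

theorem stmt3_general (N : ℕ) (hN : Squarefree N) (n : ℕ) (hn : 0 < n) :
    -∑ M ∈ N.divisors.erase 1,
        ((ArithmeticFunction.moebius M : ℤ) : ℚ) *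
          ∑ d ∈ (∏ p ∈ n.primeFactors, if p ∣ M then 1 else p ^ n.factorization p).divisors,
            (d : ℚ) =
      (if N ∣ n then (∑ d ∈ n.divisors, (d : ℚ)) - N * ∑ d ∈ (n / N).divisors, (d : ℚ)
       else ∑ d ∈ n.divisors, (d : ℚ)) := by
  change -∑ M ∈ N.divisors.erase 1, _ * ∑ d ∈ (Nat.coprimePart n M).divisors, _ = _
  rw [sum_erase_eq_sub (Nat.one_mem_divisors.2 hN.ne_zero),
    Nat.sum_moebius_mul_sum_divisors_coprimePart hN hn.ne', Nat.divisors_coprimePart hn.ne',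
    filter_true_of_mem fun d _ => Nat.coprime_one_right d, moebius_apply_one]
  split_ifs <;> push_cast <;> ring

/-- The relation `Ẽ_{2,N} = -∑_{M∣N, M≠1} φ(M) E_{2,M}` on `n`-th Fourier coefficients:
`-∑_{M∣N, M≠1} μ(M) σ(n'_M) = σ(n) - N σ(n/N)·[N ∣ n]`, where `n'_M` is the part of `n`
coprime to `M`. -/
theorem stmt3 (N : ℕ) (hN : Squarefree N) (hN1 : 1 < N) (n : ℕ) (hn : 0 < n) :
    -∑ M ∈ N.divisors.erase 1,
        ((ArithmeticFunction.moebius M : ℤ) : ℚ) *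
          ∑ d ∈ (∏ p ∈ n.primeFactors, if p ∣ M then 1 else p ^ n.factorization p).divisors,
            (d : ℚ) =
      (if N ∣ n then (∑ d ∈ n.divisors, (d : ℚ)) - N * ∑ d ∈ (n / N).divisors, (d : ℚ)
       else ∑ d ∈ n.divisors, (d : ℚ)) :=
  stmt3_general N hN n hn
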